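/- Let F_n be the set of Dyck paths of size n (paths from (0,0) to (n,n) with north and east steps staying weakly above y=x) that contain no peak with even y-coordinate and no valley with odd x-coordinate. Then |F_n| = 0 if n is even, and |F_n| = C_k (the k-th Catalan number) if n = 2k+1. -/

import Mathlib

/-!
Number the steps from 1. If a path with no bad corner is at a point with odd `y` (hence even
`x`) after `2i+1` steps, then steps `2i+2` and `2i+3` agree: otherwise they form a peak with
even `y`-coordinate `y + 1` or a valley with odd `x`-coordinate `x + 1`. Since the first step
is `N`, induction shows that the point after every odd number of steps has odd `y`, so the path
is `N · double(u) · E` with every letter of `u` doubled. Such a path is a Dyck path of size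
`2k+1` exactly when `u` is a Dyck path of size `k`, and all its corners lie after an odd number
of steps, where they are good. Hence `n` is odd and the paths of size `2k+1` are counted by
`C_k`.
-/

/-- A Dyck path of size `n`: a list of booleans (`true` = north step, `false` = east step)
from `(0,0)` to `(n,n)` staying weakly above the diagonal `y = x`. -/
def IsDyckPath (n : ℕ) (w : List Bool) : Prop :=
  w.length = 2 * n ∧ w.count true = n ∧
    ∀ k, (w.take k).count false ≤ (w.take k).count true

/-- The `y`-coordinate of the lattice point reached after `k` steps. -/
def ycoord (w : List Bool) (k : ℕ) : ℕ := (w.take k).count true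

/-- The `x`-coordinate of the lattice point reached after `k` steps. -/
def xcoord (w : List Bool) (k : ℕ) : ℕ := (w.take k).count false

/-- A peak: a north step at position `i` followed by an east step. -/
def IsPeak (w : List Bool) (i : ℕ) : Prop := w[i]? = some true ∧ w[i+1]? = some false

/-- A valley: an east step at position `i` followed by a north step. -/
def IsValley (w : List Bool) (i : ℕ) : Prop := w[i]? = some false ∧ w[i+1]? = some true

/-- Height above the diagonal after `k` steps. -/
def pdepth (w : List Bool) (k : ℕ) : ℤ := (ycoord w k : ℤ) - (xcoord w k : ℤ)

/-- Step `i` (a north step) of `w` is matched with step `j` (an east step):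
the facing east step at the same height (balanced-parentheses matching). -/
def Matches (w : List Bool) (i j : ℕ) : Prop :=
  i < j ∧ w[i]? = some true ∧ w[j]? = some false ∧
    pdepth w (j + 1) = pdepth w i ∧ ∀ k, i < k → k ≤ j → pdepth w i < pdepth w k

/-- The graph on `m` points whose edges are the upper arches and the lower arches;
its connected components are the components of the corresponding meander. -/
def meanderGraph (m : ℕ) (upper lower : ℕ → ℕ → Prop) : SimpleGraph (Fin m) where
  Adj i j := i ≠ j ∧ (upper i.1 j.1 ∨ upper j.1 i.1 ∨ lower i.1 j.1 ∨ lower j.1 i.1)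
  symm := by
    constructor
    intro i j h
    exact ⟨h.1.symm, by tauto⟩
  loopless := by
    constructor
    intro i h
    exact h.1 rfl

/-- The number of components of the meander with the matching of `P` above and the
matching of `Q` below. -/
noncomputable def trajPQ (n : ℕ) (P Q : List Bool) : ℕ :=
  Nat.card (meanderGraph (2 * n) (Matches P) (Matches Q)).ConnectedComponent

/-- The number of components of the meander with the matching of `P` above and the
rainbow matching `i ↦ 2n - 1 - i` below. -/
noncomputable def traj (n : ℕ) (P : List Bool) : ℕ :=
  Nat.card (meanderGraph (2 * n) (Matches P)
    (fun i j => i + j + 1 = 2 * n)).ConnectedComponent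

/-- No peak with even `y`-coordinate and no valley with odd `x`-coordinate. -/
def NoBadCorner (w : List Bool) : Prop :=
  (∀ i, IsPeak w i → Odd (ycoord w (i + 1))) ∧
  (∀ i, IsValley w i → Even (xcoord w (i + 1)))

/-- A bad corner: a peak with even `y`-coordinate or a valley with odd `x`-coordinate. -/
def IsBadCorner (w : List Bool) (i : ℕ) : Prop :=
  (IsPeak w i ∧ Even (ycoord w (i + 1))) ∨ (IsValley w i ∧ Odd (xcoord w (i + 1)))

/-- Interchange the two steps of the corner at positions `i`, `i+1`. -/
def swapCorner (w : List Bool) (i : ℕ) : List Bool :=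
  (w.set i (w.getD (i + 1) true)).set (i + 1) (w.getD i true)

open Classical in
/-- The involution `φ`: swap the two steps of the first bad corner, if any. -/
noncomputable def phiMap (w : List Bool) : List Bool :=
  if h : ∃ i, IsBadCorner w i then swapCorner w (Nat.find h) else w

/-- The number of unit squares between a Dyck path and the diagonal `y = x`. -/
def area (w : List Bool) : ℕ :=
  ((List.range w.length).map fun i =>
    if w.getD i true then 0 else ycoord w i - xcoord w i - 1).sum

/-- The zigzag Dyck path `(NE)^m`. -/
def zigzag (m : ℕ) : List Bool := (List.replicate m [true, false]).flatten

/-- `N^{2a_1} E^{2b_1} ⋯ N^{2a_t} E^{2b_t}` for `ab = [(a_1,b_1),…,(a_t,b_t)]`. -/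
def doubledWord (ab : List (ℕ × ℕ)) : List Bool :=
  (ab.map fun p => List.replicate (2 * p.1) true ++ List.replicate (2 * p.2) false).flatten

/-- `N^{a_1} E^{b_1} ⋯ N^{a_t} E^{b_t}` for `ab = [(a_1,b_1),…,(a_t,b_t)]`. -/
def halfWord (ab : List (ℕ × ℕ)) : List Bool :=
  (ab.map fun p => List.replicate p.1 true ++ List.replicate p.2 false).flatten

/-- All peaks at odd height (`height` = `y - x` at the peak's lattice point). -/
def AllPeaksOdd (w : List Bool) : Prop :=
  ∀ i, IsPeak w i → Odd (ycoord w (i + 1) - xcoord w (i + 1))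

/-- All peaks at even height. -/
def AllPeaksEven (w : List Bool) : Prop :=
  ∀ i, IsPeak w i → Even (ycoord w (i + 1) - xcoord w (i + 1))

/-- Steps of a Motzkin path: up, horizontal, down. -/
inductive MStep | U | H | D
deriving DecidableEq

/-- The total height change along a list of Motzkin steps. -/
def msum (l : List MStep) : ℤ :=
  (l.map fun s => match s with | MStep.U => 1 | MStep.H => 0 | MStep.D => -1).sum

/-- A Motzkin path of length `n`. -/
def IsMotzkin (n : ℕ) (l : List MStep) : Prop :=
  l.length = n ∧ msum l = 0 ∧ ∀ k, 0 ≤ msum (l.take k)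

/-- A Riordan path of length `n`: a Motzkin path with no horizontal step on the `x`-axis. -/
def IsRiordan (n : ℕ) (l : List MStep) : Prop :=
  IsMotzkin n l ∧ ∀ i, l[i]? = some MStep.H → msum (l.take i) ≠ 0

/-- The map `φ_A` from Dyck paths of size `n+1` (all peaks at odd height)
to Motzkin paths of length `n`: `v_j` is read off from steps `p_{2j} p_{2j+1}`. -/
def phiA (n : ℕ) (P : List Bool) : List MStep :=
  (List.range n).map fun j =>
    match P.getD (2 * j + 1) true, P.getD (2 * j + 2) true with
    | true, true => MStep.U
    | false, true => MStep.H
    | _, _ => MStep.D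

/-- The map `φ_B` from Dyck paths of size `n` (all peaks at even height)
to Riordan paths of length `n`: `u_j` is read off from steps `p_{2j-1} p_{2j}`. -/
def phiB (n : ℕ) (P : List Bool) : List MStep :=
  (List.range n).map fun j =>
    match P.getD (2 * j) true, P.getD (2 * j + 1) true with
    | true, true => MStep.U
    | false, true => MStep.H
    | _, _ => MStep.D

namespace List

variable {α : Type*}

def double (l : List α) : List α := l.flatMap fun a => [a, a]

@[simp] lemma double_nil : double ([] : List α) = [] := rfl

@[simp] lemma double_cons (a : α) (l : List α) : (a :: l).double = a :: a :: l.double := rfl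

@[simp] lemma length_double (l : List α) : l.double.length = 2 * l.length := by
  induction l with
  | nil => rfl
  | cons a l ih => simp only [double_cons, length_cons, ih]; ring

@[simp] lemma count_double [BEq α] (a : α) (l : List α) : l.double.count a = 2 * l.count a := by
  induction l with
  | nil => rfl
  | cons b l ih => simp only [double_cons, count_cons, ih]; ring

lemma getElem?_double (l : List α) (k : ℕ) : l.double[k]? = l[k / 2]? := by
  induction l generalizing k with
  | nil => simp
  | cons a l ih =>
    match k with
    | 0 | 1 => rfl
    | k + 2 => simp [ih, show (k + 2) / 2 = k / 2 + 1 by omega]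

lemma double_injective : Function.Injective (double : List α → List α) := by
  intro u v h
  apply ext_getElem?
  intro k
  simpa [getElem?_double] using congr($h[2 * k]?)

lemma take_double (l : List α) (k : ℕ) :
    l.double.take k = (l.take (k / 2)).double ++ (l.drop (k / 2)).take (k % 2) := by
  induction l generalizing k with
  | nil => simp
  | cons a l ih =>
    match k with
    | 0 | 1 => rfl
    | k + 2 => simp [ih, show (k + 2) / 2 = k / 2 + 1 by omega]

lemma exists_eq_double_of_getElem?_eq :
    ∀ {l : List α}, (∀ j, l[2 * j]? = l[2 * j + 1]?) → ∃ u : List α, l = u.double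
  | [], _ => ⟨[], rfl⟩
  | [_], h => by simpa using h 0
  | a :: b :: t, h => by
    obtain ⟨u, rfl⟩ := exists_eq_double_of_getElem?_eq (l := t) fun j => by
      simpa [show 2 * (j + 1) = 2 * j + 1 + 1 by ring] using h (j + 1)
    exact ⟨a :: u, by simpa using (h 0).symm⟩

end List

lemma ycoord_succ {w : List Bool} {m : ℕ} {b : Bool} (h : w[m]? = some b) :
    ycoord w (m + 1) = ycoord w m + b.toNat := by
  rw [ycoord, ycoord, List.take_add_one, h]
  cases b <;> simp

lemma xcoord_succ {w : List Bool} {m : ℕ} {b : Bool} (h : w[m]? = some b) :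
    xcoord w (m + 1) = xcoord w m + (!b).toNat := by
  rw [xcoord, xcoord, List.take_add_one, h]
  cases b <;> simp

lemma ycoord_add_xcoord {w : List Bool} {m : ℕ} (h : m ≤ w.length) :
    ycoord w m + xcoord w m = m := by
  rw [ycoord, xcoord, List.count_true_add_count_false, List.length_take]
  omega

section NoBadCorner

variable {w : List Bool}

lemma getElem?_eq_of_noBadCorner (hb : NoBadCorner w) {i : ℕ} (hy : Odd (ycoord w (2 * i + 1)))
    (hi : 2 * i + 2 < w.length) : w[2 * i + 1]? = w[2 * i + 2]? := by
  have h1 : w[2 * i + 1]? = some w[2 * i + 1] := List.getElem?_eq_getElem (by omega)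
  have h2 : w[2 * i + 2]? = some w[2 * i + 2] := List.getElem?_eq_getElem hi
  have hsum := ycoord_add_xcoord (w := w) (m := 2 * i + 1) (by omega)
  rw [Nat.odd_iff] at hy
  rw [h1, h2]
  cases hb1 : w[2 * i + 1] <;> cases hb2 : w[2 * i + 2]
  · rfl
  · have hx := hb.2 (2 * i + 1) ⟨by rw [h1, hb1], by rw [h2, hb2]⟩
    rw [xcoord_succ (hb1 ▸ h1), Nat.even_iff] at hx
    simp only [Bool.not_false, Bool.toNat_true] at hx
    omega
  · have hy' := hb.1 (2 * i + 1) ⟨by rw [h1, hb1], by rw [h2, hb2]⟩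
    rw [ycoord_succ (hb1 ▸ h1), Nat.odd_iff] at hy'
    simp only [Bool.toNat_true] at hy'
    omega
  · rfl

lemma odd_ycoord_of_noBadCorner (hb : NoBadCorner w) (h0 : w[0]? = some true) :
    ∀ i, 2 * i + 1 < w.length → Odd (ycoord w (2 * i + 1))
  | 0, _ => by rw [ycoord_succ h0]; simp [ycoord]
  | i + 1, hi => by
    have hy := odd_ycoord_of_noBadCorner hb h0 i (by omega)
    have hpair := getElem?_eq_of_noBadCorner hb hy (by omega)
    obtain ⟨b, hb1⟩ : ∃ b, w[2 * i + 1]? = some b :=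
      ⟨_, List.getElem?_eq_getElem (by omega)⟩
    rw [show 2 * (i + 1) + 1 = 2 * i + 1 + 1 + 1 by ring, ycoord_succ (hpair ▸ hb1),
      ycoord_succ hb1]
    obtain ⟨a, ha⟩ := hy
    exact ⟨a + b.toNat, by omega⟩

end NoBadCorner

def elevate (l : List Bool) : List Bool := true :: (l ++ [false])

section Elevate

variable {l : List Bool}

@[simp] lemma length_elevate : (elevate l).length = l.length + 2 := by
  simp [elevate]

@[simp] lemma count_elevate (b : Bool) : (elevate l).count b = l.count b + 1 := by
  cases b <;> simp [elevate]

lemma getElem?_elevate_succ {i : ℕ} (h : i < l.length) : (elevate l)[i + 1]? = l[i]? := by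
  simp [elevate, List.getElem?_append_left h]

lemma take_elevate_succ {k : ℕ} (h : k ≤ l.length) :
    (elevate l).take (k + 1) = true :: l.take k := by
  simp [elevate, List.take_append_of_le_length h]

lemma elevate_injective : Function.Injective elevate := by
  intro l l' h
  simpa [elevate] using h

lemma IsDyckPath.exists_eq_elevate {n : ℕ} {w : List Bool} (hw : IsDyckPath n w) (hn : 1 ≤ n) :
    ∃ l, w = elevate l := by
  obtain ⟨hlen, hcount, hballot⟩ := hw
  have hcount' : w.count false = n := by have := w.count_true_add_count_false; omega
  obtain _ | ⟨a, t⟩ := w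
  · rw [List.length_nil] at hlen; omega
  obtain rfl | ⟨L, b, rfl⟩ := t.eq_nil_or_concat
  · rw [List.length_singleton] at hlen; omega
  simp only [List.concat_eq_append] at hlen hcount hcount' hballot
  have ha : a = true := by
    have := hballot 1
    cases a <;> simp_all
  have hb : b = false := by
    have := hballot (L.length + 1)
    rw [List.take_succ_cons, List.take_left' rfl] at this
    subst ha
    cases b <;> simp_all; omega
  exact ⟨L, by simp [ha, hb, elevate]⟩

end Elevate

section ElevateDouble

variable {u : List Bool}

lemma take_elevate_double_succ {k : ℕ} (h : k ≤ 2 * u.length) :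
    (elevate u.double).take (k + 1) =
      true :: ((u.take (k / 2)).double ++ (u.drop (k / 2)).take (k % 2)) := by
  rw [take_elevate_succ (by rwa [List.length_double]), List.take_double]

lemma take_elevate_double_two_mul_succ {j : ℕ} (h : j ≤ u.length) :
    (elevate u.double).take (2 * j + 1) = true :: (u.take j).double := by
  simp [take_elevate_double_succ (u := u) (k := 2 * j) (by omega)]

lemma ycoord_elevate_double {j : ℕ} (h : j ≤ u.length) :
    ycoord (elevate u.double) (2 * j + 1) = 2 * (u.take j).count true + 1 := by
  simp [ycoord, take_elevate_double_two_mul_succ h]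

lemma xcoord_elevate_double {j : ℕ} (h : j ≤ u.length) :
    xcoord (elevate u.double) (2 * j + 1) = 2 * (u.take j).count false := by
  simp [xcoord, take_elevate_double_two_mul_succ h]

lemma even_of_getElem?_elevate_double_ne {i : ℕ}
    (hne : (elevate u.double)[i]? ≠ (elevate u.double)[i + 1]?)
    (hi : i + 1 < (elevate u.double).length) : Even i := by
  by_contra hodd
  obtain ⟨j, rfl⟩ := Nat.not_even_iff_odd.mp hodd
  simp only [length_elevate, List.length_double] at hi
  apply hne
  rw [getElem?_elevate_succ (by rw [List.length_double]; omega),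
    getElem?_elevate_succ (by rw [List.length_double]; omega),
    List.getElem?_double, List.getElem?_double]
  congr 1
  omega

lemma noBadCorner_elevate_double (u : List Bool) : NoBadCorner (elevate u.double) := by
  have corner {i : ℕ} {b : Bool} (h₁ : (elevate u.double)[i]? = some b)
      (h₂ : (elevate u.double)[i + 1]? = some !b) : ∃ j ≤ u.length, i = 2 * j := by
    have hi : i + 1 < (elevate u.double).length := (List.getElem?_eq_some_iff.mp h₂).1
    obtain ⟨j, rfl⟩ := even_of_getElem?_elevate_double_ne (by simp [h₁, h₂]) hi
    simp only [length_elevate, List.length_double] at hi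
    exact ⟨j, by omega, by ring⟩
  constructor
  · rintro i ⟨h₁, h₂⟩
    obtain ⟨j, hj, rfl⟩ := corner h₁ h₂
    rw [ycoord_elevate_double hj]
    exact odd_two_mul_add_one _
  · rintro i ⟨h₁, h₂⟩
    obtain ⟨j, hj, rfl⟩ := corner h₁ h₂
    rw [xcoord_elevate_double hj]
    exact even_two_mul _

lemma isDyckPath_elevate_double_iff {k : ℕ} :
    IsDyckPath (2 * k + 1) (elevate u.double) ↔ IsDyckPath k u := by
  have hu := u.count_true_add_count_false
  simp only [IsDyckPath, length_elevate, List.length_double, count_elevate, List.count_double]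
  refine and_congr (by omega) (and_congr (by omega) ⟨fun h m => ?_, fun h => ?_⟩)
  · have hm := h (2 * min m u.length + 1)
    rw [take_elevate_double_two_mul_succ (min_le_right _ _)] at hm
    rw [List.take_eq_take_min]
    simp only [List.count_cons_self, List.count_cons_of_ne (by decide : true ≠ false),
      List.count_double] at hm
    omega
  · rintro (_ | m)
    · simp
    by_cases hm : m ≤ 2 * u.length
    · have hr : ((u.drop (m / 2)).take (m % 2)).length ≤ 1 := by rw [List.length_take]; omega
      have hf := ((u.drop (m / 2)).take (m % 2)).count_le_length (a := false)
      have := h (m / 2)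
      rw [take_elevate_double_succ hm]
      simp only [List.count_cons_self, List.count_cons_of_ne (by decide : true ≠ false),
        List.count_append, List.count_double]
      omega
    · have := h u.length
      rw [List.take_of_length_le (by rw [length_elevate, List.length_double]; omega)]
      simp_all

end ElevateDouble

lemma IsDyckPath.exists_eq_elevate_double {n : ℕ} {w : List Bool} (hw : IsDyckPath n w)
    (hn : 1 ≤ n) (hb : NoBadCorner w) : ∃ u : List Bool, w = elevate u.double := by
  obtain ⟨l, rfl⟩ := hw.exists_eq_elevate hn
  have hl : l.length = 2 * (n - 1) := by have := hw.1; rw [length_elevate] at this; omega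
  obtain ⟨u, rfl⟩ := List.exists_eq_double_of_getElem?_eq (l := l) fun j => by
    by_cases hj : 2 * j + 1 < l.length
    · have hy := odd_ycoord_of_noBadCorner hb rfl j (by rw [length_elevate]; omega)
      have := getElem?_eq_of_noBadCorner hb hy (by rw [length_elevate]; omega)
      rwa [getElem?_elevate_succ (by omega), getElem?_elevate_succ hj] at this
    · rw [List.getElem?_eq_none (by omega), List.getElem?_eq_none (by omega)]
  exact ⟨u, rfl⟩

lemma IsDyckPath.odd_of_noBadCorner {n : ℕ} {w : List Bool} (hw : IsDyckPath n w)
    (hn : 1 ≤ n) (hb : NoBadCorner w) : Odd n := by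
  obtain ⟨u, rfl⟩ := hw.exists_eq_elevate_double hn hb
  have := hw.2.1
  rw [count_elevate, List.count_double] at this
  exact ⟨u.count true, by omega⟩

noncomputable def isDyckPathEquivNoBadCorner (k : ℕ) :
    {u : List Bool // IsDyckPath k u} ≃
      {w : List Bool // IsDyckPath (2 * k + 1) w ∧ NoBadCorner w} :=
  Equiv.ofBijective
    (fun u => ⟨elevate u.1.double, isDyckPath_elevate_double_iff.mpr u.2,
      noBadCorner_elevate_double u.1⟩) <| by
    refine ⟨fun u v h => ?_, fun ⟨w, hw, hb⟩ => ?_⟩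
    · exact Subtype.ext (List.double_injective (elevate_injective (congrArg Subtype.val h)))
    · obtain ⟨u, rfl⟩ := hw.exists_eq_elevate_double (by omega) hb
      exact ⟨⟨u, isDyckPath_elevate_double_iff.mp hw⟩, rfl⟩

def boolEquivDyckStep : Bool ≃ DyckStep where
  toFun b := bif b then .U else .D
  invFun s := s == .U
  left_inv b := by cases b <;> rfl
  right_inv s := by cases s <;> rfl

@[simp] lemma count_U_map_boolEquivDyckStep (l : List Bool) :
    (l.map boolEquivDyckStep).count .U = l.count true :=
  l.count_map_of_injective _ boolEquivDyckStep.injective true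

@[simp] lemma count_D_map_boolEquivDyckStep (l : List Bool) :
    (l.map boolEquivDyckStep).count .D = l.count false :=
  l.count_map_of_injective _ boolEquivDyckStep.injective false

@[simp] lemma count_true_map_boolEquivDyckStep_symm (l : List DyckStep) :
    (l.map boolEquivDyckStep.symm).count true = l.count .U :=
  l.count_map_of_injective _ boolEquivDyckStep.symm.injective .U

@[simp] lemma count_false_map_boolEquivDyckStep_symm (l : List DyckStep) :
    (l.map boolEquivDyckStep.symm).count false = l.count .D :=
  l.count_map_of_injective _ boolEquivDyckStep.symm.injective .D

def isDyckPathEquivDyckWord (k : ℕ) :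
    {u : List Bool // IsDyckPath k u} ≃ {p : DyckWord // p.semilength = k} where
  toFun u :=
    have hf := u.1.count_true_add_count_false
    have hl := u.2.1
    have hc := u.2.2.1
    ⟨⟨u.1.map boolEquivDyckStep, by
      rw [count_U_map_boolEquivDyckStep, count_D_map_boolEquivDyckStep]; omega,
      fun i => by simpa [← List.map_take] using u.2.2.2 i⟩,
      by simpa [DyckWord.semilength] using hc⟩
  invFun p :=
    have hl := p.1.two_mul_semilength_eq_length
    ⟨p.1.toList.map boolEquivDyckStep.symm,
      ⟨by rw [List.length_map]; omega, by simpa [DyckWord.semilength] using p.2,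
        fun i => by simpa [← List.map_take] using p.1.count_D_le_count_U i⟩⟩
  left_inv u := Subtype.ext (by simp)
  right_inv p := Subtype.ext (DyckWord.ext (by simp))

/-- The set of Dyck paths of size `n` with no bad corner has cardinality `0` if `n` is
even and the Catalan number `C_k` if `n = 2k+1`. -/
theorem fixed_point_count (n : ℕ) (hn : 1 ≤ n) :
    (Even n → Nat.card {w : List Bool // IsDyckPath n w ∧ NoBadCorner w} = 0) ∧
    (∀ k : ℕ, n = 2 * k + 1 →
      Nat.card {w : List Bool // IsDyckPath n w ∧ NoBadCorner w} = catalan k) := by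
  refine ⟨fun he => ?_, fun k hk => ?_⟩
  · have : IsEmpty {w : List Bool // IsDyckPath n w ∧ NoBadCorner w} :=
      ⟨fun ⟨_, hw, hb⟩ => Nat.not_even_iff_odd.mpr (hw.odd_of_noBadCorner hn hb) he⟩
    exact Nat.card_of_isEmpty
  · subst hk
    rw [← Nat.card_congr (isDyckPathEquivNoBadCorner k),
      Nat.card_congr (isDyckPathEquivDyckWord k), Nat.card_eq_fintype_card,
      DyckWord.card_dyckWord_semilength_eq_catalan]
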